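/- arXiv:1010.0729 — 4 statements merged into one kernel-verified Lean document; each statement's English description precedes it below -/
import Mathlib

section
/- Let I ⊆ ℂ[z₁,…,z_d] and J ⊆ ℂ[z₁,…,z_{d'}] be homogeneous ideals, and set Z(I) = V(I) ∩ closed unit ball of ℂ^d and Z(J) = V(J) ∩ closed unit ball of ℂ^{d'}. If A : ℂ^{d'} → ℂ^d is a ℂ-linear map that carries Z(J) bijectively onto Z(I) (i.e., A(Z(J)) = Z(I) and A restricted to Z(J) is injective), then A is isometric on V(J): ‖A z‖ = ‖z‖ for every z ∈ V(J). -/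
open MvPolynomial Metric

noncomputable section

/-- `Cd d` is ℂ^d with the Euclidean (Hermitian) norm. -/
abbrev Cd (d : ℕ) := EuclideanSpace ℂ (Fin d)

/-- The zero locus `V(I)` of an ideal of polynomials. -/
def VI {d : ℕ} (I : Ideal (MvPolynomial (Fin d) ℂ)) : Set (Cd d) :=
  {z | ∀ p ∈ I, eval (fun i => z i) p = 0}

/-- `Z(I) = V(I) ∩ closed unit ball`. -/
def ZI {d : ℕ} (I : Ideal (MvPolynomial (Fin d) ℂ)) : Set (Cd d) :=
  VI I ∩ Metric.closedBall 0 1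

/-- An ideal is homogeneous if it contains the homogeneous components of each of
its elements. -/
def IsHomogeneousIdeal {d : ℕ} (I : Ideal (MvPolynomial (Fin d) ℂ)) : Prop :=
  ∀ p ∈ I, ∀ n : ℕ, homogeneousComponent n p ∈ I

/-!
Homogeneity makes `V(I)` and `V(J)` complex cones, so it suffices to show that `A` preserves the
norm of every `u ∈ V(J)` with `‖u‖ = 1`. Such a `u` lies in `Z(J)`, so `‖A u‖ ≤ 1`. Conversely,
rescaling `A u` into `Z(I)`, taking a preimage in `Z(J)` and scaling back produces a
preimage of `A u` in `V(J)` of norm at most `‖A u‖ ≤ 1`; by injectivity on `Z(J)` it is `u`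
itself, whence `1 ≤ ‖A u‖`.
-/

theorem MvPolynomial.IsHomogeneous.eval_smul {R σ : Type*} [CommSemiring R]
    {p : MvPolynomial σ R} {n : ℕ} (hp : p.IsHomogeneous n) (c : R) (x : σ → R) :
    eval (c • x) p = c ^ n * eval x p := by
  simp only [eval_eq, Finset.mul_sum, Pi.smul_apply, smul_eq_mul, mul_pow,
    Finset.prod_mul_distrib, Finset.prod_pow_eq_pow_sum]
  refine Finset.sum_congr rfl fun s hs => ?_
  have hdeg : ∑ i ∈ s.support, s i = n := by
    rw [← Finsupp.degree_apply, Finsupp.degree_eq_weight_one]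
    exact hp (mem_support_iff.mp hs)
  rw [hdeg]
  ring

theorem smul_mem_VI {d : ℕ} {J : Ideal (MvPolynomial (Fin d) ℂ)} (hJ : IsHomogeneousIdeal J)
    (c : ℂ) {z : Cd d} (hz : z ∈ VI J) : c • z ∈ VI J := by
  intro p hp
  have hcoord : (fun i => (c • z) i) = c • fun i => z i := funext fun i => by simp
  rw [hcoord, ← sum_homogeneousComponent p, map_sum]
  exact Finset.sum_eq_zero fun n _ => by
    rw [(homogeneousComponent_isHomogeneous n p).eval_smul, hz _ (hJ p hp n), mul_zero]

section Cone

variable {𝕜 E F : Type*} [RCLike 𝕜] [NormedAddCommGroup E] [NormedSpace 𝕜 E]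
  [NormedAddCommGroup F] [NormedSpace 𝕜 F] {S : Set E} {T : Set F} (A : E →ₗ[𝕜] F)

theorem LinearMap.norm_map_eq_of_forall_norm_eq_one
    (hS : ∀ (c : 𝕜), ∀ z ∈ S, c • z ∈ S)
    (h : ∀ u ∈ S, ‖u‖ = 1 → ‖A u‖ = 1) : ∀ z ∈ S, ‖A z‖ = ‖z‖ := by
  intro z hz
  rcases eq_or_ne z 0 with rfl | hz0
  · simp
  have hnorm : ‖A ((‖z‖⁻¹ : 𝕜) • z)‖ = 1 := h _ (hS _ z hz) (norm_smul_inv_norm hz0)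
  rw [map_smul, norm_smul, norm_inv, RCLike.norm_ofReal, abs_norm] at hnorm
  exact ((inv_mul_eq_one₀ (norm_ne_zero_iff.mpr hz0)).mp hnorm).symm

theorem LinearMap.exists_preimage_norm_le (hS : ∀ (c : 𝕜), ∀ z ∈ S, c • z ∈ S)
    (hT : ∀ (c : 𝕜), ∀ w ∈ T, c • w ∈ T)
    (hsurj : T ∩ closedBall 0 1 ⊆ A '' (S ∩ closedBall 0 1))
    {w : F} (hw : w ∈ T) : ∃ v ∈ S, ‖v‖ ≤ ‖w‖ ∧ A v = w := by
  have hunit : (‖w‖⁻¹ : 𝕜) • w ∈ T ∩ closedBall 0 1 := by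
    refine ⟨hT _ w hw, ?_⟩
    rw [mem_closedBall_zero_iff, norm_smul, norm_inv, RCLike.norm_ofReal, abs_norm]
    exact inv_mul_le_one_of_le₀ le_rfl (norm_nonneg w)
  obtain ⟨v, ⟨hvS, hvB⟩, hAv⟩ := hsurj hunit
  refine ⟨(‖w‖ : 𝕜) • v, hS _ v hvS, ?_, ?_⟩
  · rw [norm_smul, RCLike.norm_ofReal, abs_norm]
    exact mul_le_of_le_one_right (norm_nonneg w) (mem_closedBall_zero_iff.mp hvB)
  · rcases eq_or_ne w 0 with rfl | hw0
    · simp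
    rw [map_smul, hAv, smul_inv_smul₀ (RCLike.ofReal_ne_zero.mpr (norm_ne_zero_iff.mpr hw0))]

theorem LinearMap.norm_map_eq_of_bijOn_inter_closedBall
    (hS : ∀ (c : 𝕜), ∀ z ∈ S, c • z ∈ S)
    (hT : ∀ (c : 𝕜), ∀ w ∈ T, c • w ∈ T)
    (hsurj : A '' (S ∩ closedBall 0 1) = T ∩ closedBall 0 1)
    (hinj : Set.InjOn A (S ∩ closedBall 0 1)) : ∀ z ∈ S, ‖A z‖ = ‖z‖ := by
  refine A.norm_map_eq_of_forall_norm_eq_one hS fun u hu hu1 => ?_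
  have huB : u ∈ S ∩ closedBall 0 1 := ⟨hu, mem_closedBall_zero_iff.mpr hu1.le⟩
  have hAu : A u ∈ T ∩ closedBall 0 1 := hsurj ▸ Set.mem_image_of_mem A huB
  have hAu1 : ‖A u‖ ≤ 1 := mem_closedBall_zero_iff.mp hAu.2
  obtain ⟨v, hvS, hvle, hAv⟩ := A.exists_preimage_norm_le hS hT hsurj.ge hAu.1
  have hvu : v = u := hinj ⟨hvS, mem_closedBall_zero_iff.mpr (hvle.trans hAu1)⟩ huB hAv
  exact le_antisymm hAu1 (hu1 ▸ hvu ▸ hvle)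

end Cone

/-- If a linear map `A : ℂ^{d'} → ℂ^d` carries `Z(J)` bijectively
onto `Z(I)` for homogeneous ideals `I`, `J`, then `A` is isometric on `V(J)`. -/
theorem stmt2 {d d' : ℕ} (I : Ideal (MvPolynomial (Fin d) ℂ))
    (J : Ideal (MvPolynomial (Fin d') ℂ))
    (hI : IsHomogeneousIdeal I) (hJ : IsHomogeneousIdeal J)
    (A : Cd d' →ₗ[ℂ] Cd d)
    (hsurj : A '' ZI J = ZI I) (hinj : Set.InjOn A (ZI J)) :
    ∀ z ∈ VI J, ‖A z‖ = ‖z‖ :=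
  A.norm_map_eq_of_bijOn_inter_closedBall (smul_mem_VI hJ) (smul_mem_VI hI) hsurj hinj
end
end

section
/- Let H be a complex Hilbert space, let k ≥ 1, and let V₁,…,V_k be closed subspaces of H whose orthogonal projections P_{V_i} satisfy ‖P_{V_i} ∘ P_{V_j}‖ ≤ 1/(2k) for all i ≠ j. Then for any choice of vectors x_i ∈ V_i (i = 1,…,k), one has (1/2)·Σ_{i=1}^k ‖x_i‖² ≤ ‖Σ_{i=1}^k x_i‖² ≤ (3/2)·Σ_{i=1}^k ‖x_i‖². -/
/-!
Expanding `‖∑ xᵢ‖²` gives `∑ ‖xᵢ‖²` plus the cross terms `⟪xᵢ, xⱼ⟫ = ⟪xᵢ, Pᵢ Pⱼ xⱼ⟫`, each of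
absolute value at most `‖xᵢ‖ ‖xⱼ‖ / (2k)`. Summing and using `(∑ ‖xᵢ‖)² ≤ k ∑ ‖xᵢ‖²`, the cross
terms add up to at most half of `∑ ‖xᵢ‖²`.
-/

noncomputable section

/-- The orthogonal projection onto a closed subspace `K` of a Hilbert space,
viewed as an operator from `H` to itself. -/
def projOf {H : Type*} [NormedAddCommGroup H] [InnerProductSpace ℂ H] [CompleteSpace H]
    (K : Submodule ℂ H) (hK : IsClosed (K : Set H)) : H →L[ℂ] H :=
  haveI : CompleteSpace K := hK.completeSpace_coe
  K.subtypeL.comp (K.orthogonalProjectionOnto)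

open Finset RCLike
open scoped InnerProductSpace

section

variable {𝕜 E : Type*} [RCLike 𝕜] [NormedAddCommGroup E] [InnerProductSpace 𝕜 E]

theorem Submodule.norm_inner_le_norm_starProjection_comp_mul {K L : Submodule 𝕜 E}
    [K.HasOrthogonalProjection] [L.HasOrthogonalProjection] {u v : E} (hu : u ∈ K)
    (hv : v ∈ L) : ‖⟪u, v⟫_𝕜‖ ≤ ‖K.starProjection ∘L L.starProjection‖ * (‖u‖ * ‖v‖) := by
  have hPv : ⟪u, v⟫_𝕜 = ⟪u, (K.starProjection ∘L L.starProjection) v⟫_𝕜 := by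
    rw [ContinuousLinearMap.comp_apply, starProjection_eq_self_iff.mpr hv,
      ← inner_starProjection_left_eq_right, starProjection_eq_self_iff.mpr hu]
  calc ‖⟪u, v⟫_𝕜‖ ≤ ‖u‖ * ‖(K.starProjection ∘L L.starProjection) v‖ :=
        hPv ▸ norm_inner_le_norm _ _
    _ ≤ ‖u‖ * (‖K.starProjection ∘L L.starProjection‖ * ‖v‖) := by
        gcongr; exact ContinuousLinearMap.le_opNorm _ _
    _ = ‖K.starProjection ∘L L.starProjection‖ * (‖u‖ * ‖v‖) := by ring

variable {ι : Type*} [Fintype ι] [DecidableEq ι]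

theorem norm_sum_sq_eq_sum_norm_sq_add_sum_re_inner (x : ι → E) :
    ‖∑ i, x i‖ ^ 2 = ∑ i, ‖x i‖ ^ 2 + ∑ i, ∑ j ∈ univ.erase i, re ⟪x i, x j⟫_𝕜 := by
  rw [← inner_self_eq_norm_sq (𝕜 := 𝕜), sum_inner, map_sum, ← sum_add_distrib]
  refine sum_congr rfl fun i _ => ?_
  rw [inner_sum, map_sum, ← add_sum_erase _ _ (mem_univ i), inner_self_eq_norm_sq]

theorem abs_sum_re_inner_offDiag_le (x : ι → E) {ε : ℝ} (hε : 0 ≤ ε)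
    (hx : ∀ i j, i ≠ j → ‖⟪x i, x j⟫_𝕜‖ ≤ ε * (‖x i‖ * ‖x j‖)) :
    |∑ i, ∑ j ∈ univ.erase i, re ⟪x i, x j⟫_𝕜| ≤ ε * Fintype.card ι * ∑ i, ‖x i‖ ^ 2 := by
  calc |∑ i, ∑ j ∈ univ.erase i, re ⟪x i, x j⟫_𝕜|
      ≤ ∑ i, ∑ j ∈ univ.erase i, ε * (‖x i‖ * ‖x j‖) := by
        refine (abs_sum_le_sum_abs _ _).trans (sum_le_sum fun i _ => ?_)
        refine (abs_sum_le_sum_abs _ _).trans (sum_le_sum fun j hj => ?_)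
        exact (abs_re_le_norm _).trans (hx i j (ne_of_mem_erase hj).symm)
    _ ≤ ∑ i, ∑ j, ε * (‖x i‖ * ‖x j‖) :=
        sum_le_sum fun i _ => sum_le_sum_of_subset_of_nonneg (erase_subset _ _)
          fun _ _ _ => by positivity
    _ = ε * (∑ i, ‖x i‖) ^ 2 := by simp_rw [sq, sum_mul_sum, mul_sum]
    _ ≤ ε * (Fintype.card ι * ∑ i, ‖x i‖ ^ 2) := by
        gcongr; exact sq_sum_le_card_mul_sum_sq
    _ = ε * Fintype.card ι * ∑ i, ‖x i‖ ^ 2 := by ring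

end

theorem stmt5_general {H : Type*} [NormedAddCommGroup H] [InnerProductSpace ℂ H] [CompleteSpace H]
    {k : ℕ} (V : Fin k → Submodule ℂ H)
    (hVc : ∀ i, IsClosed ((V i) : Set H))
    (hproj : ∀ i j, i ≠ j →
      ‖(projOf (V i) (hVc i)).comp (projOf (V j) (hVc j))‖ ≤ 1 / (2 * k))
    (x : Fin k → H) (hx : ∀ i, x i ∈ V i) :
    (1 / 2 : ℝ) * ∑ i, ‖x i‖ ^ 2 ≤ ‖∑ i, x i‖ ^ 2 ∧
      ‖∑ i, x i‖ ^ 2 ≤ (3 / 2 : ℝ) * ∑ i, ‖x i‖ ^ 2 := by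
  have := fun i => (hVc i).completeSpace_coe
  have hcross := abs_sum_re_inner_offDiag_le (𝕜 := ℂ) x (ε := 1 / (2 * k)) (by positivity)
    fun i j hij => (Submodule.norm_inner_le_norm_starProjection_comp_mul (hx i) (hx j)).trans
      -- `projOf (V i) _` unfolds to `(V i).starProjection`
      (by gcongr; exact hproj i j hij)
  have hε : (1 / (2 * k) : ℝ) * Fintype.card (Fin k) ≤ 1 / 2 := by
    rw [Fintype.card_fin]
    rcases eq_or_ne k 0 with rfl | hk
    · norm_num
    · field_simp; rfl
  have hA : 0 ≤ ∑ i, ‖x i‖ ^ 2 := by positivity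
  rw [norm_sum_sq_eq_sum_norm_sq_add_sum_re_inner (𝕜 := ℂ)]
  constructor <;> nlinarith [abs_le.mp hcross]

/-- If `V₁, …, V_k` (`k ≥ 1`) are closed subspaces of a complex
Hilbert space whose orthogonal projections satisfy `‖P_i P_j‖ ≤ 1/(2k)` for `i ≠ j`,
then for all `xᵢ ∈ Vᵢ`:
`(1/2) Σ ‖xᵢ‖² ≤ ‖Σ xᵢ‖² ≤ (3/2) Σ ‖xᵢ‖²`. -/
theorem stmt5 {H : Type*} [NormedAddCommGroup H] [InnerProductSpace ℂ H] [CompleteSpace H]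
    {k : ℕ} (hk : 1 ≤ k) (V : Fin k → Submodule ℂ H)
    (hVc : ∀ i, IsClosed ((V i) : Set H))
    (hproj : ∀ i j, i ≠ j →
      ‖(projOf (V i) (hVc i)).comp (projOf (V j) (hVc j))‖ ≤ 1 / (2 * k))
    (x : Fin k → H) (hx : ∀ i, x i ∈ V i) :
    (1 / 2 : ℝ) * ∑ i, ‖x i‖ ^ 2 ≤ ‖∑ i, x i‖ ^ 2 ∧
      ‖∑ i, x i‖ ^ 2 ≤ (3 / 2 : ℝ) * ∑ i, ‖x i‖ ^ 2 :=
  stmt5_general V hVc hproj x hx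
end
end

section
/- Let B be the ball algebra on the closed unit ball of ℂ^d, and let J ⊆ B be a closed homogeneous ideal. Then √J = {f ∈ B : f(z) = 0 for all z ∈ V_Ω(J)}, where V_Ω(J) = {z in the open unit ball 𝔹_d : g(z) = 0 for all g ∈ J} and √J = {f ∈ B : f^n ∈ J for some n ≥ 1}. -/
open MvPolynomial Metric

noncomputable section

abbrev CBall (d : ℕ) : Set (Cd d) := Metric.closedBall (0 : Cd d) 1

instance (d : ℕ) : CompactSpace (CBall d) :=
  isCompact_iff_compactSpace.mp (isCompact_closedBall _ _)

/-- The `i`-th coordinate function on the closed unit ball. -/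
def coordFn (d : ℕ) (i : Fin d) : C(CBall d, ℂ) :=
  ⟨fun z => (z : Cd d) i, by first | fun_prop | exact (EuclideanSpace.proj (𝕜 := ℂ) i).continuous.comp continuous_subtype_val⟩

/-- Restriction of a polynomial to the closed unit ball, as an element of
`C(closedBall, ℂ)`. -/
def polyMap (d : ℕ) : MvPolynomial (Fin d) ℂ →ₐ[ℂ] C(CBall d, ℂ) :=
  aeval (coordFn d)

/-- The ball algebra: the closure, in the Banach algebra of continuous functions on
the closed unit ball of ℂ^d with the supremum norm, of the restrictions of
polynomials. -/
def ballAlg (d : ℕ) : Set C(CBall d, ℂ) := closure (Set.range (polyMap d))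

/-- `J` is an ideal of the ball algebra `B`. -/
def IsIdealOfBallAlg (d : ℕ) (J : Set C(CBall d, ℂ)) : Prop :=
  J ⊆ ballAlg d ∧ (0 : C(CBall d, ℂ)) ∈ J ∧
    (∀ f ∈ J, ∀ g ∈ J, f + g ∈ J) ∧ (∀ f ∈ J, ∀ g ∈ ballAlg d, g * f ∈ J)

/-- The self-map of the closed ball given by `z ↦ t z` for `‖t‖ ≤ 1`. -/
def dilatePt (d : ℕ) (t : ℂ) (ht : ‖t‖ ≤ 1) : C(CBall d, CBall d) :=
  ⟨fun z => ⟨t • (z : Cd d), by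
      have hz : ‖(z : Cd d)‖ ≤ 1 := mem_closedBall_zero_iff.mp z.2
      show t • (z : Cd d) ∈ Metric.closedBall 0 1
      rw [mem_closedBall_zero_iff, norm_smul]
      exact mul_le_one₀ ht (norm_nonneg _) hz⟩,
    by exact Continuous.subtype_mk (continuous_subtype_val.const_smul t) _⟩

/-- The dilation `f ↦ (z ↦ f (t z))` on continuous functions on the closed ball. -/
def dilateFn (d : ℕ) (t : ℂ) (ht : ‖t‖ ≤ 1) (f : C(CBall d, ℂ)) : C(CBall d, ℂ) :=
  f.comp (dilatePt d t ht)

/-- A closed ideal of the ball algebra is homogeneous if it is invariant under all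
dilations `z ↦ t z`, `|t| < 1`. -/
def IsHomogBallIdeal (d : ℕ) (J : Set C(CBall d, ℂ)) : Prop :=
  ∀ f ∈ J, ∀ t : ℂ, ∀ ht : ‖t‖ < 1, dilateFn d t ht.le f ∈ J

/-- `V_Ω(J)`: the points of the open unit ball where all members of `J` vanish,
viewed as points of the closed ball. -/
def VOmega (d : ℕ) (J : Set C(CBall d, ℂ)) : Set (CBall d) :=
  {z | ‖(z : Cd d)‖ < 1 ∧ ∀ g ∈ J, g z = 0}

/-!
For `f ∈ B` the circle averages `f_k = (2π)⁻¹ ∫ e^{-ikθ} f(e^{iθ} ·) dθ` are homogeneous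
polynomials of degree `k`, and `f(t ·) = ∑ tᵏ f_k` in sup norm for `|t| < 1`; hence a closed
subspace containing every `f_k` contains `f`, and `(fg)_k = ∑_{i+j=k} f_i g_j` by density of
the polynomials. A closed homogeneous `J` contains the components of its elements, so
`I = {p : p|_B ∈ J}` is a homogeneous polynomial ideal and `V(I)` is a cone meeting the open ball
in `V_Ω(J)`. If `f` vanishes on `V_Ω(J)`, each `f_k` vanishes there, hence on the whole cone
`V(I)`, so `f_k ∈ √I` by Hilbert's Nullstellensatz. As `(√I)^N ⊆ I` for some `N`, every
component of `f^N` lies in `I ⊆ J`, and therefore `f^N ∈ J`.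
-/

open Complex Filter Topology

namespace MvPolynomial

variable {σ R : Type*} [CommSemiring R]

attribute [local instance] MvPolynomial.gradedAlgebra in
theorem homogeneousComponent_mul (p q : MvPolynomial σ R) (k : ℕ) :
    homogeneousComponent k (p * q) =
      ∑ ij ∈ Finset.HasAntidiagonal.antidiagonal k,
        homogeneousComponent ij.1 p * homogeneousComponent ij.2 q := by
  simp_rw [← decomposition.decompose'_apply]
  rw [← DirectSum.coe_mul_apply_eq_sum_antidiagonal]
  exact congrArg (fun x : DirectSum ℕ (homogeneousSubmodule σ R ·) => (x k : MvPolynomial σ R))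
    (DirectSum.decompose_mul (homogeneousSubmodule σ R) p q)

theorem IsHomogeneous.eval_smul_s10 {p : MvPolynomial σ R} {n : ℕ} (hp : p.IsHomogeneous n)
    (t : R) (x : σ → R) : eval (t • x) p = t ^ n * eval x p := by
  rw [eval_eq, eval_eq, Finset.mul_sum]
  refine Finset.sum_congr rfl fun u hu => ?_
  simp only [Pi.smul_apply, smul_eq_mul, mul_pow, Finset.prod_mul_distrib,
    Finset.prod_pow_eq_pow_sum, ← hp.degree_eq_sum_deg_support hu]
  ring

theorem sum_homogeneousComponent_of_totalDegree_lt {p : MvPolynomial σ R} {N : ℕ}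
    (hN : p.totalDegree < N) : ∑ m ∈ Finset.range N, homogeneousComponent m p = p := by
  conv_rhs => rw [← sum_homogeneousComponent p]
  refine (Finset.sum_subset (Finset.range_subset_range.mpr hN) fun m _ hm => ?_).symm
  exact homogeneousComponent_eq_zero _ _ (by simpa using hm)

end MvPolynomial

theorem Submodule.intervalIntegral_mem {E : Type*} [NormedAddCommGroup E] [NormedSpace ℝ E]
    [CompleteSpace E] (S : Submodule ℝ E) (hS : IsClosed (S : Set E)) {f : ℝ → E}
    (hf : ∀ x, f x ∈ S) (a b : ℝ) : ∫ x in a..b, f x ∈ S := by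
  have : CompleteSpace S := hS.completeSpace_coe
  have key := S.subtypeₗᵢ.intervalIntegral_comp_comm (a := a) (b := b)
    (μ := MeasureTheory.volume) fun x => (⟨f x, hf x⟩ : S)
  rw [Submodule.coe_subtypeₗᵢ] at key
  exact key ▸ Subtype.property _

theorem integral_exp_int_mul_I (n : ℤ) :
    ∫ θ in (0 : ℝ)..2 * Real.pi, exp (n * θ * I) = if n = 0 then (2 * Real.pi : ℂ) else 0 := by
  split_ifs with hn
  · simp [hn]
  · have hc : (n : ℂ) * I ≠ 0 := by simp [hn, I_ne_zero]
    simp_rw [mul_right_comm _ _ I]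
    rw [integral_exp_mul_complex hc, ofReal_zero, mul_zero, exp_zero, sub_eq_zero.mpr, zero_div]
    push_cast
    simpa [mul_comm, mul_assoc, mul_left_comm] using exp_int_mul_two_pi_mul_I n

section BallAlgebra

variable {d : ℕ}

theorem polyMap_apply (p : MvPolynomial (Fin d) ℂ) (z : CBall d) :
    polyMap d p z = eval (z : Cd d).ofLp p := by
  induction p using MvPolynomial.induction_on with
  | C a => simp [polyMap]
  | add p q hp hq => simp [hp, hq]
  | mul_X p i hp =>
    rw [map_mul, ContinuousMap.mul_apply, hp, map_mul, eval_X, polyMap, aeval_X]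
    rfl

theorem polyMap_mem_ballAlg (p : MvPolynomial (Fin d) ℂ) : polyMap d p ∈ ballAlg d :=
  subset_closure ⟨p, rfl⟩

theorem ballAlg_eq_topologicalClosure :
    ballAlg d = ((polyMap d).range.topologicalClosure : Set C(CBall d, ℂ)) := by
  rw [ballAlg, Subalgebra.topologicalClosure_coe, AlgHom.coe_range]

theorem pow_mem_ballAlg {f : C(CBall d, ℂ)} (hf : f ∈ ballAlg d) (n : ℕ) : f ^ n ∈ ballAlg d := by
  rw [ballAlg_eq_topologicalClosure] at *
  exact pow_mem hf n

theorem dilatePt_coe (t : ℂ) (ht : ‖t‖ ≤ 1) (z : CBall d) :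
    (dilatePt d t ht z : Cd d) = t • (z : Cd d) := rfl

theorem norm_dilateFn_le (t : ℂ) (ht : ‖t‖ ≤ 1) (f : C(CBall d, ℂ)) :
    ‖dilateFn d t ht f‖ ≤ ‖f‖ :=
  (ContinuousMap.norm_le _ (norm_nonneg f)).mpr fun _ => f.norm_coe_le_norm _

theorem dilateFn_one (f : C(CBall d, ℂ)) : dilateFn d 1 norm_one.le f = f := by
  ext z
  exact congrArg f (Subtype.ext (one_smul ℂ (z : Cd d)))

theorem continuous_dilateFn (t : ℂ) (ht : ‖t‖ ≤ 1) : Continuous (dilateFn d t ht) :=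
  ContinuousMap.continuous_precomp _

theorem continuous_dilateFn_scale (f : C(CBall d, ℂ)) :
    Continuous fun t : closedBall (0 : ℂ) 1 => dilateFn d t (mem_closedBall_zero_iff.mp t.2) f := by
  refine ContinuousMap.continuous_of_continuous_uncurry _ ?_
  exact f.continuous.comp (Continuous.subtype_mk (by fun_prop) _)

theorem dilateFn_mem_of_forall_norm_lt {C : Set C(CBall d, ℂ)} (hC : IsClosed C)
    {f : C(CBall d, ℂ)} (h : ∀ t : ℂ, ∀ ht : ‖t‖ < 1, dilateFn d t ht.le f ∈ C)
    (t : ℂ) (ht : ‖t‖ ≤ 1) : dilateFn d t ht f ∈ C := by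
  have hdense : Dense {s : closedBall (0 : ℂ) 1 | ‖(s : ℂ)‖ < 1} := by
    rw [Subtype.dense_iff]
    refine (closure_ball (0 : ℂ) one_ne_zero).symm.subset.trans (closure_mono ?_)
    intro s hs
    exact ⟨⟨s, ball_subset_closedBall hs⟩, mem_ball_zero_iff.mp hs, rfl⟩
  refine hdense.induction (P := fun s => dilateFn d s _ f ∈ C) (fun s hs => h s hs)
    (hC.preimage (continuous_dilateFn_scale f)) ⟨t, mem_closedBall_zero_iff.mpr ht⟩

theorem mem_of_forall_dilateFn_mem {C : Set C(CBall d, ℂ)} (hC : IsClosed C)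
    {f : C(CBall d, ℂ)} (h : ∀ t : ℂ, ∀ ht : ‖t‖ < 1, dilateFn d t ht.le f ∈ C) : f ∈ C :=
  dilateFn_one f ▸ dilateFn_mem_of_forall_norm_lt hC h 1 norm_one.le

theorem dilateFn_polyMap (t : ℂ) (ht : ‖t‖ ≤ 1) (p : MvPolynomial (Fin d) ℂ) {N : ℕ}
    (hN : p.totalDegree < N) :
    dilateFn d t ht (polyMap d p) =
      ∑ m ∈ Finset.range N, t ^ m • polyMap d (homogeneousComponent m p) := by
  ext z
  simp only [dilateFn, ContinuousMap.comp_apply, polyMap_apply, dilatePt_coe,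
    ContinuousMap.coe_sum, Finset.sum_apply, ContinuousMap.coe_smul, Pi.smul_apply,
    WithLp.ofLp_smul, smul_eq_mul]
  conv_lhs => rw [← sum_homogeneousComponent_of_totalDegree_lt hN]
  simp only [map_sum, (homogeneousComponent_isHomogeneous _ p).eval_smul_s10]

end BallAlgebra

section HomogComponent

variable {d : ℕ}

variable (d) in
def dilateCLM (t : ℂ) (ht : ‖t‖ ≤ 1) : C(CBall d, ℂ) →L[ℂ] C(CBall d, ℂ) where
  toFun := dilateFn d t ht
  map_add' _ _ := rfl
  map_smul' _ _ := rfl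
  cont := continuous_dilateFn t ht

theorem dilateCLM_apply (t : ℂ) (ht : ‖t‖ ≤ 1) (f : C(CBall d, ℂ)) :
    dilateCLM d t ht f = dilateFn d t ht f := rfl

variable (d) in
def homogIntegrand (k : ℕ) (f : C(CBall d, ℂ)) (θ : ℝ) : C(CBall d, ℂ) :=
  exp (-(k * θ * I)) • dilateFn d (exp (θ * I)) (norm_exp_ofReal_mul_I θ).le f

theorem continuous_homogIntegrand (k : ℕ) (f : C(CBall d, ℂ)) :
    Continuous (homogIntegrand d k f) := by
  refine (by fun_prop : Continuous fun θ : ℝ => exp (-(k * θ * I))).smul ?_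
  exact (continuous_dilateFn_scale f).comp
    (Continuous.subtype_mk (by fun_prop) fun θ => mem_closedBall_zero_iff.mpr (by simp))

theorem homogIntegrand_add (k : ℕ) (f g : C(CBall d, ℂ)) :
    homogIntegrand d k (f + g) = homogIntegrand d k f + homogIntegrand d k g := by
  ext1 θ
  simp only [homogIntegrand, ← dilateCLM_apply, map_add, smul_add, Pi.add_apply]

theorem homogIntegrand_smul (k : ℕ) (c : ℂ) (f : C(CBall d, ℂ)) :
    homogIntegrand d k (c • f) = c • homogIntegrand d k f := by
  ext1 θ
  simp only [homogIntegrand, ← dilateCLM_apply, map_smul, smul_comm _ c, Pi.smul_apply]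

theorem norm_homogIntegrand_le (k : ℕ) (f : C(CBall d, ℂ)) (θ : ℝ) :
    ‖homogIntegrand d k f θ‖ ≤ ‖f‖ := by
  rw [homogIntegrand, norm_smul, ← ofReal_natCast, ← ofReal_mul, ← neg_mul, ← ofReal_neg,
    norm_exp_ofReal_mul_I, one_mul]
  exact norm_dilateFn_le _ _ f

theorem norm_circleMean_homogIntegrand_le (k : ℕ) (f : C(CBall d, ℂ)) :
    ‖(2 * Real.pi)⁻¹ • ∫ θ in (0 : ℝ)..2 * Real.pi, homogIntegrand d k f θ‖ ≤ ‖f‖ := by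
  have hpi : 0 < 2 * Real.pi := by positivity
  have hint := intervalIntegral.norm_integral_le_of_norm_le_const
    (a := 0) (b := 2 * Real.pi) fun θ _ => norm_homogIntegrand_le k f θ
  rw [sub_zero, abs_of_pos hpi] at hint
  calc ‖(2 * Real.pi)⁻¹ • ∫ θ in (0 : ℝ)..2 * Real.pi, homogIntegrand d k f θ‖
      ≤ (2 * Real.pi)⁻¹ * (‖f‖ * (2 * Real.pi)) := by
        rw [norm_smul, Real.norm_of_nonneg (by positivity)]
        gcongr
    _ = ‖f‖ := by field_simp

variable (d) in
def homogComponent (k : ℕ) : C(CBall d, ℂ) →L[ℂ] C(CBall d, ℂ) :=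
  LinearMap.mkContinuous
    { toFun := fun f => (2 * Real.pi)⁻¹ • ∫ θ in (0 : ℝ)..2 * Real.pi, homogIntegrand d k f θ
      map_add' := fun f g => by
        rw [homogIntegrand_add, ← smul_add, ← intervalIntegral.integral_add
          ((continuous_homogIntegrand k f).intervalIntegrable _ _)
          ((continuous_homogIntegrand k g).intervalIntegrable _ _)]
        rfl
      map_smul' := fun c f => by
        simp only [homogIntegrand_smul, Pi.smul_apply, intervalIntegral.integral_smul,
          smul_comm _ c, RingHom.id_apply] }
    1 fun f => (one_mul ‖f‖).symm ▸ norm_circleMean_homogIntegrand_le k f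

theorem homogComponent_apply (k : ℕ) (f : C(CBall d, ℂ)) :
    homogComponent d k f =
      (2 * Real.pi)⁻¹ • ∫ θ in (0 : ℝ)..2 * Real.pi, homogIntegrand d k f θ := rfl

theorem norm_homogComponent_le (k : ℕ) : ‖homogComponent d k‖ ≤ 1 :=
  LinearMap.mkContinuous_norm_le _ zero_le_one _

theorem homogComponent_mem_of_forall_dilateFn_mem (S : Submodule ℂ C(CBall d, ℂ))
    (hS : IsClosed (S : Set C(CBall d, ℂ))) {f : C(CBall d, ℂ)}
    (h : ∀ θ : ℝ, dilateFn d (exp (θ * I)) (norm_exp_ofReal_mul_I θ).le f ∈ S) (k : ℕ) :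
    homogComponent d k f ∈ S :=
  (S.restrictScalars ℝ).smul_mem _ <|
    (S.restrictScalars ℝ).intervalIntegral_mem hS (fun θ => S.smul_mem _ (h θ)) _ _

theorem homogComponent_apply_eq_zero {f : C(CBall d, ℂ)} {z : CBall d}
    (h : ∀ θ : ℝ, f (dilatePt d (exp (θ * I)) (norm_exp_ofReal_mul_I θ).le z) = 0) (k : ℕ) :
    homogComponent d k f z = 0 :=
  homogComponent_mem_of_forall_dilateFn_mem _ (ContinuousMap.evalCLM ℂ z).isClosed_ker h k

theorem homogIntegrand_polyMap (k : ℕ) (p : MvPolynomial (Fin d) ℂ) {N : ℕ}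
    (hN : p.totalDegree < N) (θ : ℝ) :
    homogIntegrand d k (polyMap d p) θ = ∑ m ∈ Finset.range N,
      exp (((m : ℤ) - k : ℤ) * θ * I) • polyMap d (homogeneousComponent m p) := by
  rw [homogIntegrand, dilateFn_polyMap _ _ p hN, Finset.smul_sum]
  refine Finset.sum_congr rfl fun m _ => ?_
  rw [smul_smul, ← exp_nat_mul, ← exp_add]
  push_cast
  ring_nf

theorem homogComponent_polyMap (k : ℕ) (p : MvPolynomial (Fin d) ℂ) :
    homogComponent d k (polyMap d p) = polyMap d (homogeneousComponent k p) := by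
  have hN : p.totalDegree < p.totalDegree + k + 1 := by omega
  have hk : k ∈ Finset.range (p.totalDegree + k + 1) := Finset.mem_range.mpr (by omega)
  rw [homogComponent_apply,
    intervalIntegral.integral_congr fun θ _ => homogIntegrand_polyMap k p hN θ,
    intervalIntegral.integral_finsetSum (f := fun (m : ℕ) θ =>
      exp (((m : ℤ) - k : ℤ) * θ * I) • polyMap d (homogeneousComponent m p))
      fun m _ => Continuous.intervalIntegrable (by fun_prop) _ _]
  simp only [intervalIntegral.integral_smul_const, integral_exp_int_mul_I, sub_eq_zero,
    Nat.cast_inj, ite_smul, zero_smul, Finset.sum_ite_eq', hk, if_true]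
  rw [← ofReal_ofNat, ← ofReal_mul, Complex.coe_smul, inv_smul_smul₀ (by positivity)]

theorem exists_isHomogeneous_polyMap_eq_homogComponent {f : C(CBall d, ℂ)}
    (hf : f ∈ ballAlg d) (k : ℕ) :
    ∃ q : MvPolynomial (Fin d) ℂ, q.IsHomogeneous k ∧ polyMap d q = homogComponent d k f := by
  have : FiniteDimensional ℂ (homogeneousSubmodule (Fin d) ℂ k) :=
    Module.Finite.of_fg (homogeneousSubmodule_fg (σ := Fin d) (R := ℂ) k)
  set H := (homogeneousSubmodule (Fin d) ℂ k).map (polyMap d).toLinearMap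
  refine H.closed_of_finiteDimensional.closure_subset
    (map_mem_closure (homogComponent d k).continuous hf ?_)
  rintro _ ⟨p, rfl⟩
  exact ⟨homogeneousComponent k p, homogeneousComponent_mem k p,
    (homogComponent_polyMap k p).symm⟩

theorem homogComponent_mul {f g : C(CBall d, ℂ)} (hf : f ∈ ballAlg d) (hg : g ∈ ballAlg d)
    (k : ℕ) : homogComponent d k (f * g) = ∑ ij ∈ Finset.HasAntidiagonal.antidiagonal k,
      homogComponent d ij.1 f * homogComponent d ij.2 g := by
  have hpoly : Set.EqOn (fun x : C(CBall d, ℂ) × C(CBall d, ℂ) => homogComponent d k (x.1 * x.2))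
      (fun x => ∑ ij ∈ Finset.HasAntidiagonal.antidiagonal k,
        homogComponent d ij.1 x.1 * homogComponent d ij.2 x.2)
      (Set.range (polyMap d) ×ˢ Set.range (polyMap d)) := by
    rintro ⟨_, _⟩ ⟨⟨p, rfl⟩, ⟨q, rfl⟩⟩
    simp only [← map_mul, homogComponent_polyMap, homogeneousComponent_mul, map_sum]
  have hfg : (f, g) ∈ closure (Set.range (polyMap d) ×ˢ Set.range (polyMap d)) := by
    rw [closure_prod_eq]
    exact ⟨hf, hg⟩
  simpa only using hpoly.closure (by fun_prop) (by fun_prop) hfg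

theorem tendsto_sum_homogComponent {f : C(CBall d, ℂ)} (hf : f ∈ ballAlg d) {t : ℂ}
    (ht : ‖t‖ < 1) : Tendsto (fun K => ∑ k ∈ Finset.range K, t ^ k • homogComponent d k f)
      atTop (𝓝 (dilateFn d t ht.le f)) := by
  set F : ℕ → C(CBall d, ℂ) →L[ℂ] C(CBall d, ℂ) :=
    fun K => ∑ k ∈ Finset.range K, t ^ k • homogComponent d k
  have hbound : ∀ K, ‖F K‖ ≤ (1 - ‖t‖)⁻¹ := fun K => calc
    ‖F K‖ ≤ ∑ k ∈ Finset.range K, ‖t‖ ^ k := by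
        refine (norm_sum_le _ _).trans (Finset.sum_le_sum fun k _ => ?_)
        rw [norm_smul, norm_pow]
        exact mul_le_of_le_one_right (by positivity) (norm_homogComponent_le k)
    _ ≤ (1 - ‖t‖)⁻¹ := by
        have := geom_sum_Ico_le_of_lt_one (m := 0) (n := K) (norm_nonneg t) ht
        rwa [← Finset.range_eq_Ico, pow_zero, one_div] at this
  have hequi : Equicontinuous ((↑) ∘ F) :=
    (show (∃ C, ∀ K, ‖F K‖ ≤ C) ↔ _ from (NormedSpace.equicontinuous_TFAE F).out 5 1).mp
      ⟨_, hbound⟩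
  have hclosed := hequi.isClosed_setOfPred_tendsto (l := atTop) (dilateCLM d t ht.le).continuous
  suffices ballAlg d ⊆ {x | Tendsto (fun K => F K x) atTop (𝓝 (dilateCLM d t ht.le x))} by
    simpa [F, dilateCLM_apply] using this hf
  refine hclosed.closure_subset_iff.mpr ?_
  rintro _ ⟨p, rfl⟩
  refine tendsto_atTop_of_eventually_const (i₀ := p.totalDegree + 1) fun K hK => ?_
  simp only [F, Function.comp_apply, sum_apply, smul_apply, homogComponent_polyMap,
    dilateCLM_apply, dilateFn_polyMap _ _ p (Nat.lt_of_succ_le hK)]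

theorem mem_of_forall_homogComponent_mem (S : Submodule ℂ C(CBall d, ℂ))
    (hS : IsClosed (S : Set C(CBall d, ℂ))) {f : C(CBall d, ℂ)} (hf : f ∈ ballAlg d)
    (h : ∀ k, homogComponent d k f ∈ S) : f ∈ S :=
  mem_of_forall_dilateFn_mem hS fun _ ht => hS.mem_of_tendsto (tendsto_sum_homogComponent hf ht)
    (Eventually.of_forall fun _ => S.sum_mem fun k _ => S.smul_mem _ (h k))

end HomogComponent

section Ideal

variable {d : ℕ} {J : Set C(CBall d, ℂ)}

theorem polyMap_C_mul (c : ℂ) (f : C(CBall d, ℂ)) : polyMap d (C c) * f = c • f := by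
  rw [Algebra.smul_def, ← (polyMap d).commutes c]
  rfl

variable (d) in
def polyImage (I : Ideal (MvPolynomial (Fin d) ℂ)) : Submodule ℂ C(CBall d, ℂ) :=
  (I.restrictScalars ℂ).map (polyMap d).toLinearMap

theorem polyImage_mono {I I' : Ideal (MvPolynomial (Fin d) ℂ)} (h : I ≤ I') :
    polyImage d I ≤ polyImage d I' :=
  Submodule.map_mono h

theorem mul_mem_polyImage_mul {I I' : Ideal (MvPolynomial (Fin d) ℂ)} {f g : C(CBall d, ℂ)}
    (hf : f ∈ polyImage d I) (hg : g ∈ polyImage d I') : f * g ∈ polyImage d (I * I') := by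
  obtain ⟨p, hp, rfl⟩ := hf
  obtain ⟨q, hq, rfl⟩ := hg
  exact ⟨p * q, Ideal.mul_mem_mul hp hq, map_mul (polyMap d) p q⟩

theorem homogComponent_pow_mem_polyImage (I : Ideal (MvPolynomial (Fin d) ℂ))
    {f : C(CBall d, ℂ)} (hf : f ∈ ballAlg d) (h : ∀ k, homogComponent d k f ∈ polyImage d I)
    (n k : ℕ) : homogComponent d k (f ^ n) ∈ polyImage d (I ^ n) := by
  induction n generalizing k with
  | zero =>
    rw [pow_zero, pow_zero, Ideal.one_eq_top, ← map_one (polyMap d), homogComponent_polyMap]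
    exact ⟨_, Submodule.mem_top, rfl⟩
  | succ n ih =>
    rw [pow_succ', pow_succ', homogComponent_mul hf (pow_mem_ballAlg hf n)]
    exact Submodule.sum_mem _ fun ij _ => mul_mem_polyImage_mul (h ij.1) (ih ij.2)

namespace IsIdealOfBallAlg

variable (hJ : IsIdealOfBallAlg d J)
include hJ

def toSubmodule : Submodule ℂ C(CBall d, ℂ) where
  carrier := J
  add_mem' hf hg := hJ.2.2.1 _ hf _ hg
  zero_mem' := hJ.2.1
  smul_mem' c f hf := polyMap_C_mul c f ▸ hJ.2.2.2 f hf _ (polyMap_mem_ballAlg (C c))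

def polyIdeal : Ideal (MvPolynomial (Fin d) ℂ) where
  carrier := {p | polyMap d p ∈ J}
  add_mem' {p q} hp hq := by
    simpa only [Set.mem_ofPred_eq, map_add] using hJ.2.2.1 _ hp _ hq
  zero_mem' := by simpa only [Set.mem_ofPred_eq, map_zero] using hJ.2.1
  smul_mem' q p hp := by
    simpa only [Set.mem_ofPred_eq, smul_eq_mul, map_mul] using
      hJ.2.2.2 _ hp _ (polyMap_mem_ballAlg q)

theorem mem_polyIdeal {p : MvPolynomial (Fin d) ℂ} : p ∈ hJ.polyIdeal ↔ polyMap d p ∈ J :=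
  Iff.rfl

theorem polyImage_polyIdeal_le : polyImage d hJ.polyIdeal ≤ hJ.toSubmodule := by
  rintro _ ⟨p, hp, rfl⟩
  exact hp

end IsIdealOfBallAlg

end Ideal

section Homogeneous

variable {d : ℕ} {J : Set C(CBall d, ℂ)}

theorem IsHomogBallIdeal.dilateFn_mem (hJhom : IsHomogBallIdeal d J) (hJcl : IsClosed J)
    {g : C(CBall d, ℂ)} (hg : g ∈ J) (t : ℂ) (ht : ‖t‖ ≤ 1) : dilateFn d t ht g ∈ J :=
  dilateFn_mem_of_forall_norm_lt hJcl (hJhom g hg) t ht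

theorem IsHomogBallIdeal.homogComponent_apply_eq_zero_of_mem_VOmega (hJhom : IsHomogBallIdeal d J)
    (hJcl : IsClosed J) {f : C(CBall d, ℂ)} (hf : ∀ z ∈ VOmega d J, f z = 0) {z : CBall d}
    (hz : z ∈ VOmega d J) (k : ℕ) : homogComponent d k f z = 0 := by
  refine homogComponent_apply_eq_zero (fun θ => hf _ ⟨?_, fun g hg => ?_⟩) k
  · rw [dilatePt_coe, norm_smul, norm_exp_ofReal_mul_I, one_mul]
    exact hz.1
  · exact hz.2 _ (hJhom.dilateFn_mem hJcl hg _ _)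

namespace IsIdealOfBallAlg

variable (hJ : IsIdealOfBallAlg d J) (hJcl : IsClosed J) (hJhom : IsHomogBallIdeal d J)
include hJ hJcl hJhom

theorem homogComponent_mem {g : C(CBall d, ℂ)} (hg : g ∈ J) (k : ℕ) :
    homogComponent d k g ∈ J :=
  homogComponent_mem_of_forall_dilateFn_mem hJ.toSubmodule hJcl
    (fun _ => hJhom.dilateFn_mem hJcl hg _ _) k

theorem smul_mem_zeroLocus_polyIdeal {w : Fin d → ℂ} (hw : w ∈ zeroLocus ℂ hJ.polyIdeal)
    (s : ℂ) : s • w ∈ zeroLocus ℂ hJ.polyIdeal := by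
  rw [mem_zeroLocus_iff] at hw ⊢
  intro p hp
  change eval (s • w) p = 0
  rw [← sum_homogeneousComponent p, map_sum]
  refine Finset.sum_eq_zero fun m _ => ?_
  have hm : eval w (homogeneousComponent m p) = 0 := hw _ <| by
    rw [mem_polyIdeal, ← homogComponent_polyMap]
    exact hJ.homogComponent_mem hJcl hJhom hp m
  rw [(homogeneousComponent_isHomogeneous m p).eval_smul_s10, hm, mul_zero]

theorem mem_VOmega_of_mem_zeroLocus {z : CBall d} (hz : ‖(z : Cd d)‖ < 1)
    (hzero : (z : Cd d).ofLp ∈ zeroLocus ℂ hJ.polyIdeal) : z ∈ VOmega d J := by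
  refine ⟨hz, fun g hg => ?_⟩
  refine mem_of_forall_homogComponent_mem _ (ContinuousMap.evalCLM ℂ z).isClosed_ker (hJ.1 hg)
    fun k => ?_
  obtain ⟨q, -, hq⟩ := exists_isHomogeneous_polyMap_eq_homogComponent (hJ.1 hg) k
  have hqI : q ∈ hJ.polyIdeal := by
    rw [mem_polyIdeal, hq]
    exact hJ.homogComponent_mem hJcl hJhom hg k
  have : eval (z : Cd d).ofLp q = 0 := mem_zeroLocus_iff.mp hzero q hqI
  rw [← polyMap_apply, hq] at this
  exact this

/-- Scaling a point of the cone `V(I)` into the open ball multiplies the value of the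
degree-`k` form `q` by `sᵏ ≠ 0`. -/
theorem mem_vanishingIdeal_zeroLocus_polyIdeal {f : C(CBall d, ℂ)}
    (hf : ∀ z ∈ VOmega d J, f z = 0) {q : MvPolynomial (Fin d) ℂ} {k : ℕ}
    (hq : q.IsHomogeneous k) (hqf : polyMap d q = homogComponent d k f) :
    q ∈ vanishingIdeal ℂ (zeroLocus ℂ hJ.polyIdeal) := by
  rw [mem_vanishingIdeal_iff]
  intro w hw
  change eval w q = 0
  set v : Cd d := WithLp.toLp 2 w
  set s : ℝ := (‖v‖ + 1)⁻¹
  have hs : 0 < s := by positivity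
  have hsv : ‖(s : ℂ) • v‖ < 1 := by
    rw [norm_smul, norm_real, Real.norm_of_nonneg hs.le, inv_mul_lt_one₀ (by positivity)]
    linarith
  set z : CBall d := ⟨(s : ℂ) • v, mem_closedBall_zero_iff.mpr hsv.le⟩
  have hz : (z : Cd d).ofLp = (s : ℂ) • w := rfl
  have hzV : z ∈ VOmega d J :=
    hJ.mem_VOmega_of_mem_zeroLocus hJcl hJhom hsv
      (hz ▸ hJ.smul_mem_zeroLocus_polyIdeal hJcl hJhom hw _)
  have h0 := hJhom.homogComponent_apply_eq_zero_of_mem_VOmega hJcl hf hzV k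
  rw [← hqf, polyMap_apply, hz, hq.eval_smul_s10] at h0
  exact (mul_eq_zero.mp h0).resolve_left (pow_ne_zero _ (ofReal_ne_zero.mpr hs.ne'))

end IsIdealOfBallAlg

end Homogeneous

/-- projective Nullstellensatz for the ball algebra. For a closed
homogeneous ideal `J` of the ball algebra `B`,
`√J = {f ∈ B : f(z) = 0 for all z ∈ V_Ω(J)}`. -/
theorem stmt10 (d : ℕ) (J : Set C(CBall d, ℂ))
    (hJ : IsIdealOfBallAlg d J) (hJcl : IsClosed J) (hJhom : IsHomogBallIdeal d J) :
    {f : C(CBall d, ℂ) | f ∈ ballAlg d ∧ ∃ n : ℕ, 1 ≤ n ∧ f ^ n ∈ J} =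
      {f : C(CBall d, ℂ) | f ∈ ballAlg d ∧ ∀ z ∈ VOmega d J, f z = 0} := by
  ext f
  refine ⟨fun ⟨hfB, n, hn, hfn⟩ => ⟨hfB, fun z hz => ?_⟩, fun ⟨hfB, hf⟩ => ⟨hfB, ?_⟩⟩
  · exact (pow_eq_zero_iff (Nat.one_le_iff_ne_zero.mp hn)).mp (by simpa using hz.2 _ hfn)
  · have hrad : ∀ k, homogComponent d k f ∈ polyImage d hJ.polyIdeal.radical := fun k => by
      obtain ⟨q, hq, hqf⟩ := exists_isHomogeneous_polyMap_eq_homogComponent hfB k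
      refine ⟨q, ?_, hqf⟩
      rw [← vanishingIdeal_zeroLocus_eq_radical (K := ℂ)]
      exact hJ.mem_vanishingIdeal_zeroLocus_polyIdeal hJcl hJhom hf hq hqf
    obtain ⟨N, hN⟩ := Ideal.exists_radical_pow_le_of_fg hJ.polyIdeal (IsNoetherian.noetherian _)
    refine ⟨N + 1, by omega, mem_of_forall_homogComponent_mem hJ.toSubmodule hJcl
      (pow_mem_ballAlg hfB _) fun k => hJ.polyImage_polyIdeal_le ?_⟩
    exact polyImage_mono ((Ideal.pow_le_pow_right N.le_succ).trans hN)
      (homogComponent_pow_mem_polyImage _ hfB hrad (N + 1) k)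
end
end

section
/- Let γ : 𝔻 → ℂ^d be a holomorphic map on the open unit disc 𝔻 ⊆ ℂ, and let A : ℂ^d → ℂ^d be a ℂ-linear map such that ‖A(γ(t))‖ = ‖γ(t)‖ for every t ∈ 𝔻. Then ‖A(γ'(0))‖ = ‖γ'(0)‖, where γ'(0) is the derivative of γ at 0. -/
open Metric

noncomputable section

/-! Write `T = A†A - 1`, so that `⟪x, T x⟫ = ‖A x‖² - ‖x‖²` and the hypothesis says
`⟪γ t, T (γ t)⟫ = 0` on the disc. For holomorphic `f`, `g`, the real derivative of
`t ↦ ⟪f t, g t⟫` in the direction `y` is `conj y ⟪f', g⟫ + y ⟪f, g'⟫`; the two terms have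
different `ℂ`-linearity in `y`, so if the pairing vanishes identically both terms vanish.
Applied twice (first to `γ, Tγ`, then to `γ, Tγ'`) this gives `⟪γ'(0), T γ'(0)⟫ = 0`. -/

open Filter Topology ComplexConjugate InnerProductSpace

lemma Complex.eq_zero_and_eq_zero_of_forall_conj_mul_add_mul {a b : ℂ}
    (h : ∀ y : ℂ, conj y * a + y * b = 0) : a = 0 ∧ b = 0 := by
  have h₁ := h 1
  have hI := h Complex.I
  simp only [map_one, one_mul, Complex.conj_I] at h₁ hI
  constructor
  · linear_combination h₁ / 2 + Complex.I * hI / 2 + (a - b) / 2 * Complex.I_sq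
  · linear_combination h₁ / 2 - Complex.I * hI / 2 + (b - a) / 2 * Complex.I_sq

lemma inner_eq_zero_of_hasDerivAt_of_eventually_inner_eq_zero {E : Type*} [NormedAddCommGroup E]
    [InnerProductSpace ℂ E] {f g : ℂ → E} {f' g' : E} {t : ℂ}
    (hf : HasDerivAt f f' t) (hg : HasDerivAt g g' t) (h : ∀ᶠ s in 𝓝 t, ⟪f s, g s⟫_ℂ = 0) :
    ⟪f', g t⟫_ℂ = 0 ∧ ⟪f t, g'⟫_ℂ = 0 := by
  have hzero : HasFDerivAt (fun s => ⟪f s, g s⟫_ℂ) (0 : ℂ →L[ℝ] ℂ) t :=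
    (hasFDerivAt_const 0 t).congr_of_eventuallyEq h
  have hderiv := ((hf.hasFDerivAt.restrictScalars ℝ).inner ℂ
    (hg.hasFDerivAt.restrictScalars ℝ)).unique hzero
  refine Complex.eq_zero_and_eq_zero_of_forall_conj_mul_add_mul fun y => ?_
  have := congrArg (· y) hderiv
  simpa [inner_smul_left, inner_smul_right, add_comm] using this

theorem norm_map_deriv_eq_of_norm_map_eq {E : Type*} [NormedAddCommGroup E]
    [InnerProductSpace ℂ E] [CompleteSpace E] {U : Set ℂ} (hU : IsOpen U) {γ : ℂ → E}
    (hγ : DifferentiableOn ℂ γ U) (A : E →L[ℂ] E) (hA : ∀ t ∈ U, ‖A (γ t)‖ = ‖γ t‖)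
    {t : ℂ} (ht : t ∈ U) : ‖A (deriv γ t)‖ = ‖deriv γ t‖ := by
  set T := A.adjoint ∘L A - 1
  have inner_T : ∀ x, ⟪x, T x⟫_ℂ = (‖A x‖ ^ 2 - ‖x‖ ^ 2 : ℝ) := fun x => by
    simp [T, ContinuousLinearMap.adjoint_inner_right, inner_self_eq_norm_sq_to_K]
  have hasDerivAt_deriv : ∀ s ∈ U, HasDerivAt γ (deriv γ s) s := fun s hs =>
    ((hγ s hs).differentiableAt (hU.mem_nhds hs)).hasDerivAt
  have h₀ : ∀ s ∈ U, ⟪γ s, T (γ s)⟫_ℂ = 0 := fun s hs => by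
    rw [inner_T, hA s hs, sub_self, Complex.ofReal_zero]
  have h₁ : ∀ s ∈ U, ⟪γ s, T (deriv γ s)⟫_ℂ = 0 := fun s hs =>
    (inner_eq_zero_of_hasDerivAt_of_eventually_inner_eq_zero (hasDerivAt_deriv s hs)
      (T.hasFDerivAt.comp_hasDerivAt s (hasDerivAt_deriv s hs))
      (eventually_of_mem (hU.mem_nhds hs) h₀)).2
  have hγ' : DifferentiableAt ℂ (deriv γ) t :=
    (hγ.deriv hU t ht).differentiableAt (hU.mem_nhds ht)
  have h₂ : ⟪deriv γ t, T (deriv γ t)⟫_ℂ = 0 :=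
    (inner_eq_zero_of_hasDerivAt_of_eventually_inner_eq_zero (hasDerivAt_deriv t ht)
      (T.hasFDerivAt.comp_hasDerivAt t hγ'.hasDerivAt)
      (eventually_of_mem (hU.mem_nhds ht) h₁)).1
  rw [inner_T, Complex.ofReal_eq_zero, sub_eq_zero] at h₂
  exact (sq_eq_sq₀ (norm_nonneg _) (norm_nonneg _)).1 h₂

/-- If `γ : 𝔻 → ℂ^d` is holomorphic on the open unit disc and the
linear map `A` preserves the norm of `γ(t)` for every `t ∈ 𝔻`, then `A` preserves
the norm of the tangent vector `γ'(0)`. -/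
theorem stmt19 {d : ℕ} (γ : ℂ → Cd d)
    (hγ : DifferentiableOn ℂ γ (Metric.ball 0 1))
    (A : Cd d →ₗ[ℂ] Cd d)
    (hA : ∀ t ∈ Metric.ball (0 : ℂ) 1, ‖A (γ t)‖ = ‖γ t‖) :
    ‖A (deriv γ 0)‖ = ‖deriv γ 0‖ :=
  norm_map_deriv_eq_of_norm_map_eq isOpen_ball hγ (LinearMap.toContinuousLinearMap A) hA
    (mem_ball_self one_pos)
end
end
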